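/- arXiv:2310.12312 — 4 statements merged into one kernel-verified Lean document; each statement's English description precedes it below -/
import Mathlib

section
/- For every n ≥ 1 and all x ∈ ℝ, the generalized Laguerre polynomials satisfy the first structure relation x·(d/dx)L_n^α(x) = n·L_n^α(x) − (n+α)·L_{n−1}^α(x). -/
open Polynomial Finset

/-- The generalized Laguerre polynomial
`L_n^α(x) = Σ_{k=0}^n (−1)^k ((α+k+1)_{n−k} / ((n−k)!·k!)) x^k`. -/
noncomputable def laguerre (α : ℝ) (n : ℕ) : Polynomial ℝ :=
  ∑ k ∈ Finset.range (n + 1),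
    Polynomial.C ((-1 : ℝ) ^ k * (ascPochhammer ℝ (n - k)).eval (α + k + 1) /
      ((n - k).factorial * k.factorial)) * Polynomial.X ^ k

/-- First structure relation:
`x·(d/dx)L_n^α(x) = n·L_n^α(x) − (n+α)·L_{n−1}^α(x)` for `n ≥ 1`. -/
theorem laguerre_first_structure (α : ℝ) (n : ℕ) (hn : 1 ≤ n) (x : ℝ) :
    x * (Polynomial.derivative (laguerre α n)).eval x
      = (n : ℝ) * (laguerre α n).eval x - ((n : ℝ) + α) * (laguerre α (n - 1)).eval x := by
  obtain ⟨m, rfl⟩ : ∃ m, n = m + 1 := ⟨n - 1, (Nat.succ_pred_eq_of_pos hn).symm⟩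
  simp only [laguerre, Nat.add_sub_cancel, derivative_sum, derivative_C_mul_X_pow,
    eval_finset_sum, eval_mul, eval_pow, eval_C, eval_X, eval_natCast]
  rw [Finset.mul_sum, Finset.mul_sum, Finset.mul_sum,
    Finset.sum_range_succ (n := m + 1), Finset.sum_range_succ (n := m + 1),
    eq_sub_iff_add_eq, add_right_comm]
  congr 1
  · rw [← Finset.sum_add_distrib]
    refine Finset.sum_congr rfl fun k hk => ?_
    rw [Finset.mem_range] at hk
    have hk' : k ≤ m := Nat.lt_succ_iff.mp hk
    have h1 : m + 1 - k = (m - k) + 1 := by omega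
    rw [h1, ascPochhammer_succ_right, eval_mul, eval_add, eval_X, eval_natCast]
    have hx : (k : ℝ) * (x ^ (k - 1) * x) = (k : ℝ) * x ^ k := by
      cases k with
      | zero => simp
      | succ j => push_cast; ring
    have hfac : (((m - k) + 1).factorial : ℝ) = ((m - k : ℕ) + 1) * (m - k).factorial := by
      rw [Nat.factorial_succ]; push_cast; ring
    have hf1 : ((m - k).factorial : ℝ) ≠ 0 := Nat.cast_ne_zero.mpr (Nat.factorial_ne_zero _)
    have hf2 : (k.factorial : ℝ) ≠ 0 := Nat.cast_ne_zero.mpr (Nat.factorial_ne_zero _)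
    have hf3 : ((m - k : ℕ) : ℝ) + 1 ≠ 0 := by positivity
    have hP : (α + (k : ℝ) + 1 + ((m - k : ℕ) : ℝ)) = α + ((m : ℝ) + 1) := by
      have : ((m - k : ℕ) : ℝ) = (m : ℝ) - k := by push_cast [hk']; ring
      rw [this]; ring
    have hmk : ((m : ℝ) + 1) - k = ((m - k : ℕ) : ℝ) + 1 := by push_cast [hk']; ring
    rw [hfac, hP]
    rw [mul_comm x, mul_assoc, mul_assoc, hx]
    have hcast : ((m - k : ℕ) : ℝ) = (m : ℝ) - k := by push_cast [hk']; ring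
    have hf3' : (m : ℝ) - k + 1 ≠ 0 := by rw [← hcast]; positivity
    rw [hcast]
    push_cast
    field_simp
    ring
  · simp only [Nat.sub_self, Nat.add_sub_cancel, ascPochhammer_zero, eval_one,
      Nat.factorial_zero]
    push_cast
    ring
end

section
/- Let α > −1 be a real number. For all m, n ∈ ℕ, the generalized Laguerre polynomials satisfy the orthogonality relation ∫_0^∞ L_n^α(x) L_m^α(x) x^α e^{−x} dx = 0 if m ≠ n, and ∫_0^∞ (L_n^α(x))^2 x^α e^{−x} dx = Γ(α+n+1)/n!, which is nonzero. -/
/-!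
Expanding `L_n^α` in monomials and integrating term by term with
`∫₀^∞ x^(s-1) e^(-x) dx = Γ(s)` turns the moment `∫ L_n^α(x) x^l x^α e^(-x) dx` into
`Γ(α+n+1)/n!` times the alternating sum `Σ_k (-1)^k C(n,k) (α+1+k)_l`, which is `(-1)^n` times
the `n`-th forward difference at `α+1` of the degree-`l` Pochhammer polynomial. That difference
vanishes for `l < n` and equals `n!` for `l = n`, the Pochhammer polynomial being monic. So
`L_n^α` is orthogonal to every polynomial of degree `< n`, and its squared norm is
`(-1)^n Γ(α+n+1)` times its leading coefficient `(-1)^n/n!`.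
-/

open Polynomial Finset MeasureTheory Real

open fwdDiff Set

theorem Real.Gamma_mul_ascPochhammer_eval {x : ℝ} (hx : 0 < x) (m : ℕ) :
    Gamma x * (ascPochhammer ℝ m).eval x = Gamma (x + m) := by
  induction m with
  | zero => simp
  | succ m ih =>
    rw [ascPochhammer_succ_eval, ← mul_assoc, ih, Nat.cast_succ, ← add_assoc,
      Gamma_add_one (by positivity), mul_comm]

theorem Polynomial.sum_range_neg_one_pow_mul_choose_mul_eval {R : Type*} [CommRing R]
    (P : R[X]) (n : ℕ) (β : R) :
    ∑ k ∈ range (n + 1), (-1) ^ k * n.choose k * P.eval (β + k) =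
      (-1) ^ n * (Δ_[1])^[n] P.eval β := by
  rw [fwdDiff_iter_eq_sum_shift, mul_sum]
  refine sum_congr rfl fun k hk => ?_
  obtain ⟨j, rfl⟩ := Nat.exists_eq_add_of_le (mem_range_succ_iff.mp hk)
  have hsq : ((-1 : R) ^ j) * (-1) ^ j = 1 := by rw [← mul_pow]; simp
  simp only [Nat.add_sub_cancel_left, zsmul_eq_mul, nsmul_eq_mul, mul_one]
  push_cast
  linear_combination (-(-1) ^ k * (k + j).choose k * P.eval (β + k)) * hsq

section GammaWeight

variable {α : ℝ}

theorem add_natCast_add_one_pos (hα : -1 < α) (j : ℕ) : 0 < α + j + 1 := by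
  linarith [(j.cast_nonneg : (0 : ℝ) ≤ j)]

theorem eqOn_pow_mul_rpow_mul_exp_neg (j : ℕ) :
    EqOn (fun x : ℝ => x ^ j * x ^ α * exp (-x))
      (fun x => exp (-x) * x ^ (α + j + 1 - 1)) (Ioi 0) := fun x (hx : 0 < x) => by
  simp only [add_sub_cancel_right, rpow_add hx, rpow_natCast]
  ring

theorem integrableOn_pow_mul_rpow_mul_exp_neg (hα : -1 < α) (j : ℕ) :
    IntegrableOn (fun x : ℝ => x ^ j * x ^ α * exp (-x)) (Ioi 0) :=
  (GammaIntegral_convergent (add_natCast_add_one_pos hα j)).congr_fun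
    (eqOn_pow_mul_rpow_mul_exp_neg j).symm measurableSet_Ioi

theorem integral_pow_mul_rpow_mul_exp_neg (hα : -1 < α) (j : ℕ) :
    ∫ x in Ioi (0 : ℝ), x ^ j * x ^ α * exp (-x) = Gamma (α + j + 1) := by
  rw [Gamma_eq_integral (add_natCast_add_one_pos hα j)]
  exact setIntegral_congr_fun measurableSet_Ioi (eqOn_pow_mul_rpow_mul_exp_neg j)

theorem integrableOn_eval_mul_rpow_mul_exp_neg (hα : -1 < α) (P : ℝ[X]) :
    IntegrableOn (fun x => P.eval x * x ^ α * exp (-x)) (Ioi 0) := by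
  simp_rw [eval_eq_sum_range, sum_mul]
  refine integrable_finsetSum _ fun i _ => ?_
  simpa only [mul_assoc] using (integrableOn_pow_mul_rpow_mul_exp_neg hα i).const_mul (P.coeff i)

theorem integral_sum_mul_pow_mul_rpow_mul_exp_neg {ι : Type*} (hα : -1 < α) (s : Finset ι)
    (c : ι → ℝ) (e : ι → ℕ) :
    ∫ x in Ioi (0 : ℝ), (∑ i ∈ s, c i * x ^ e i) * x ^ α * exp (-x) =
      ∑ i ∈ s, c i * Gamma (α + e i + 1) := by
  simp_rw [sum_mul, mul_assoc]
  rw [integral_finsetSum _ fun i _ => by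
    simpa only [mul_assoc] using (integrableOn_pow_mul_rpow_mul_exp_neg hα (e i)).const_mul (c i)]
  simp_rw [integral_const_mul, ← mul_assoc, integral_pow_mul_rpow_mul_exp_neg hα]

end GammaWeight

theorem natDegree_laguerre_le (α : ℝ) (n : ℕ) : (laguerre α n).natDegree ≤ n := by
  refine natDegree_sum_le_of_forall_le _ _ fun k hk => (natDegree_C_mul_X_pow_le _ _).trans ?_
  exact mem_range_succ_iff.mp hk

theorem coeff_laguerre {α : ℝ} {n k : ℕ} (hk : k ≤ n) :
    (laguerre α n).coeff k = (-1) ^ k * (ascPochhammer ℝ (n - k)).eval (α + k + 1) /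
      ((n - k).factorial * k.factorial) := by
  simp [laguerre, mem_range_succ_iff.mpr hk]

theorem coeff_laguerre_self (α : ℝ) (n : ℕ) :
    (laguerre α n).coeff n = (-1) ^ n / n.factorial := by
  simp [coeff_laguerre le_rfl]

theorem coeff_laguerre_mul_Gamma {α : ℝ} (hα : -1 < α) {n k : ℕ} (hk : k ≤ n) (l : ℕ) :
    (laguerre α n).coeff k * Gamma (α + (k + l : ℕ) + 1) =
      Gamma (α + n + 1) / n.factorial *
        ((-1) ^ k * n.choose k * (ascPochhammer ℝ l).eval (α + 1 + k)) := by
  have hpos : 0 < α + 1 + k := by linarith [add_natCast_add_one_pos hα k]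
  have hΓl : Gamma (α + (k + l : ℕ) + 1) =
      Gamma (α + 1 + k) * (ascPochhammer ℝ l).eval (α + 1 + k) := by
    rw [Gamma_mul_ascPochhammer_eval hpos]; push_cast; ring_nf
  have hΓn : Gamma (α + n + 1) =
      Gamma (α + 1 + k) * (ascPochhammer ℝ (n - k)).eval (α + 1 + k) := by
    rw [Gamma_mul_ascPochhammer_eval hpos, Nat.cast_sub hk]; ring_nf
  have hchoose : (n.choose k : ℝ) * k.factorial * (n - k).factorial = n.factorial := by
    exact_mod_cast Nat.choose_mul_factorial_mul_factorial hk
  have hchoose_ne : (n.choose k : ℝ) ≠ 0 := by exact_mod_cast (Nat.choose_pos hk).ne'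
  rw [coeff_laguerre hk, hΓl, hΓn, ← hchoose, add_right_comm α 1]
  field_simp

theorem eval_laguerre_mul_pow (α x : ℝ) (n l : ℕ) :
    (laguerre α n).eval x * x ^ l =
      ∑ k ∈ range (n + 1), (laguerre α n).coeff k * x ^ (k + l) := by
  rw [eval_eq_sum_range' (Nat.lt_succ_of_le (natDegree_laguerre_le α n)), sum_mul]
  simp_rw [pow_add, mul_assoc]

theorem integral_laguerre_mul_pow {α : ℝ} (hα : -1 < α) (n l : ℕ) :
    ∫ x in Ioi (0 : ℝ), (laguerre α n).eval x * x ^ l * x ^ α * exp (-x) =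
      Gamma (α + n + 1) / n.factorial *
        ((-1) ^ n * (Δ_[1])^[n] (ascPochhammer ℝ l).eval (α + 1)) := by
  simp_rw [eval_laguerre_mul_pow]
  rw [integral_sum_mul_pow_mul_rpow_mul_exp_neg hα, ← sum_range_neg_one_pow_mul_choose_mul_eval,
    mul_sum]
  exact sum_congr rfl fun k hk => coeff_laguerre_mul_Gamma hα (mem_range_succ_iff.mp hk) l

theorem integral_laguerre_mul_eval {α : ℝ} (hα : -1 < α) {n : ℕ} {Q : ℝ[X]}
    (hQ : Q.natDegree ≤ n) :
    ∫ x in Ioi (0 : ℝ), (laguerre α n).eval x * Q.eval x * x ^ α * exp (-x) =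
      (-1) ^ n * Gamma (α + n + 1) * Q.coeff n := by
  have hexpand : ∀ x : ℝ, (laguerre α n).eval x * Q.eval x * x ^ α * exp (-x) =
      ∑ l ∈ range (n + 1),
        Q.coeff l * ((laguerre α n).eval x * x ^ l * x ^ α * exp (-x)) := by
    intro x
    rw [eval_eq_sum_range' (Nat.lt_succ_of_le hQ), mul_sum, sum_mul, sum_mul]
    exact sum_congr rfl fun l _ => by ring
  have hlower : ∀ l < n, (Δ_[1])^[n] (ascPochhammer ℝ l).eval (α + 1) = 0 := fun l hl => by
    rw [fwdDiff_iter_eq_zero_of_degree_lt (by simpa using hl), Pi.zero_apply]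
  have htop : (Δ_[1])^[n] (ascPochhammer ℝ n).eval (α + 1) = n.factorial := by
    have := (ascPochhammer ℝ n).fwdDiff_iter_degree_eq_factorial
    rw [ascPochhammer_natDegree, (monic_ascPochhammer ℝ n).leadingCoeff] at this
    simp [this]
  simp_rw [hexpand]
  rw [integral_finsetSum _ fun l _ => ?_]
  · simp_rw [integral_const_mul, integral_laguerre_mul_pow hα]
    rw [sum_range_succ, sum_eq_zero fun l hl => by rw [hlower l (mem_range.mp hl)]; ring, htop,
      zero_add]
    field_simp
  · have := (integrableOn_eval_mul_rpow_mul_exp_neg hα (laguerre α n * X ^ l)).const_mul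
      (Q.coeff l)
    simp only [Polynomial.eval_mul, eval_pow, eval_X] at this
    exact this

theorem integral_laguerre_mul_laguerre_of_lt {α : ℝ} (hα : -1 < α) {m n : ℕ} (h : m < n) :
    ∫ x in Ioi (0 : ℝ), (laguerre α n).eval x * (laguerre α m).eval x * x ^ α * exp (-x) =
      0 := by
  have hdeg := natDegree_laguerre_le α m
  rw [integral_laguerre_mul_eval hα (hdeg.trans h.le),
    coeff_eq_zero_of_natDegree_lt (hdeg.trans_lt h), mul_zero]

theorem integral_laguerre_sq {α : ℝ} (hα : -1 < α) (n : ℕ) :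
    ∫ x in Ioi (0 : ℝ), (laguerre α n).eval x ^ 2 * x ^ α * exp (-x) =
      Gamma (α + n + 1) / n.factorial := by
  simp_rw [sq]
  rw [integral_laguerre_mul_eval hα (natDegree_laguerre_le α n), coeff_laguerre_self]
  have hsign : ((-1 : ℝ) ^ n) * (-1) ^ n = 1 := by rw [← mul_pow]; simp
  linear_combination Gamma (α + n + 1) / n.factorial * hsign

/-- Orthogonality of the Laguerre polynomials with respect to the weight
`x^α e^{−x}` on `(0,∞)`, with squared norm `Γ(α+n+1)/n!` (which is nonzero). -/
theorem laguerre_orthogonality (α : ℝ) (hα : -1 < α) (m n : ℕ) :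
    (m ≠ n →
      ∫ x in Set.Ioi (0 : ℝ),
        (laguerre α n).eval x * (laguerre α m).eval x * x ^ α * Real.exp (-x) = 0)
    ∧ (∫ x in Set.Ioi (0 : ℝ),
        ((laguerre α n).eval x) ^ 2 * x ^ α * Real.exp (-x))
        = Real.Gamma (α + n + 1) / n.factorial
    ∧ Real.Gamma (α + n + 1) / n.factorial ≠ 0 := by
  refine ⟨fun hmn => ?_, integral_laguerre_sq hα n, ?_⟩
  · rcases hmn.lt_or_gt with h | h
    · exact integral_laguerre_mul_laguerre_of_lt hα h
    · simp_rw [mul_comm ((laguerre α n).eval _) ((laguerre α m).eval _)]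
      exact integral_laguerre_mul_laguerre_of_lt hα h
  · have hΓ : 0 < Gamma (α + n + 1) := Gamma_pos_of_pos (add_natCast_add_one_pos hα n)
    positivity
end

section
/- Let α > −1 be a real number and n ∈ ℕ. For all x, y ∈ ℝ, the Laguerre reproducing kernel satisfies the Christoffel–Darboux formula (x − y)·K_n^α(x,y) = ((n+1)!/Γ(α+n+1)) · (L_n^α(x)·L_{n+1}^α(y) − L_{n+1}^α(x)·L_n^α(y)). -/
open Polynomial Finset MeasureTheory Real

/-- The `n`-th Laguerre reproducing kernel
`K_n^α(x,y) = Σ_{k=0}^n (k!/Γ(α+k+1)) L_k^α(x) L_k^α(y)`. -/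
noncomputable def laguerreKernel (α : ℝ) (n : ℕ) (x y : ℝ) : ℝ :=
  ∑ k ∈ Finset.range (n + 1),
    (k.factorial : ℝ) / Real.Gamma (α + k + 1) * (laguerre α k).eval x * (laguerre α k).eval y


/-!
Comparing coefficients gives the three-term recurrence
`(n+2) L_{n+2} = (2n+3+α−x) L_{n+1} − (n+1+α) L_n`. Multiplying it at `y` by `L_{n+1}(x)` and
subtracting the same at `x` shows that the Casoratian `W_n = L_n(x) L_{n+1}(y) − L_{n+1}(x) L_n(y)`
satisfies `(n+2) W_{n+1} = (x−y) L_{n+1}(x) L_{n+1}(y) + (n+1+α) W_n`; with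
`Γ(α+n+2) = (α+n+1) Γ(α+n+1)` this is exactly the inductive step of the formula.
-/

@[simp]
lemma laguerre_zero (α : ℝ) : laguerre α 0 = 1 := by
  simp [laguerre]

@[simp]
lemma laguerre_one (α : ℝ) : laguerre α 1 = C (α + 1) - X := by
  simp [laguerre, sum_range_succ, sub_eq_add_neg]

-- For `k > n` the truncated `n - k` makes this a nonzero junk value, hence the `if` below.
noncomputable def laguerreCoeff (α : ℝ) (n k : ℕ) : ℝ :=
  (-1 : ℝ) ^ k * (ascPochhammer ℝ (n - k)).eval (α + k + 1) / ((n - k).factorial * k.factorial)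

lemma coeff_laguerre_s7 (α : ℝ) (n k : ℕ) :
    (laguerre α n).coeff k = if k ≤ n then laguerreCoeff α n k else 0 := by
  simp [laguerre, coeff_X_pow, laguerreCoeff]

section CoefficientRecurrence

variable (α : ℝ) (n : ℕ)

lemma laguerreCoeff_recurrence_zero :
    ((n : ℝ) + 2) * laguerreCoeff α (n + 2) 0
      = (2 * n + 3 + α) * laguerreCoeff α (n + 1) 0 - (n + 1 + α) * laguerreCoeff α n 0 := by
  simp only [laguerreCoeff, Nat.sub_zero, Nat.factorial_zero, pow_zero, one_mul,
    ascPochhammer_succ_eval, Nat.factorial_succ]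
  field_simp
  push_cast
  ring

lemma laguerreCoeff_recurrence_succ {j : ℕ} (hj : j + 1 ≤ n) :
    ((n : ℝ) + 2) * laguerreCoeff α (n + 2) (j + 1)
      = (2 * n + 3 + α) * laguerreCoeff α (n + 1) (j + 1) - laguerreCoeff α (n + 1) j
        - (n + 1 + α) * laguerreCoeff α n (j + 1) := by
  obtain ⟨m, rfl⟩ := Nat.exists_eq_add_of_le hj
  simp only [laguerreCoeff, show j + 1 + m + 2 - (j + 1) = m + 2 by omega,
    show j + 1 + m + 1 - (j + 1) = m + 1 by omega, show j + 1 + m + 1 - j = m + 2 by omega,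
    Nat.add_sub_cancel_left]
  rw [ascPochhammer_succ_eval (m + 1), ascPochhammer_succ_eval m, ascPochhammer_succ_left,
    eval_mul, eval_X, eval_comp, eval_add, eval_X, eval_one, ascPochhammer_succ_eval m]
  rw [show α + j + 1 + 1 = α + (j + 1 : ℕ) + 1 by push_cast; ring]
  simp only [Nat.factorial_succ]
  field_simp
  push_cast
  ring

lemma laguerreCoeff_recurrence_penultimate :
    ((n : ℝ) + 2) * laguerreCoeff α (n + 2) (n + 1)
      = (2 * n + 3 + α) * laguerreCoeff α (n + 1) (n + 1) - laguerreCoeff α (n + 1) n := by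
  simp only [laguerreCoeff, show n + 2 - (n + 1) = 1 by omega, Nat.sub_self,
    show n + 1 - n = 1 by omega, Nat.factorial_zero, ascPochhammer_one,
    ascPochhammer_zero, eval_X, eval_one, Nat.factorial_succ]
  field_simp
  push_cast
  ring

lemma laguerreCoeff_recurrence_top :
    ((n : ℝ) + 2) * laguerreCoeff α (n + 2) (n + 2) = -laguerreCoeff α (n + 1) (n + 1) := by
  simp only [laguerreCoeff, Nat.sub_self, ascPochhammer_zero, eval_one, Nat.factorial_zero,
    Nat.factorial_succ (n + 1)]
  field_simp
  push_cast
  ring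

end CoefficientRecurrence

theorem laguerre_recurrence (α : ℝ) (n : ℕ) :
    C ((n : ℝ) + 2) * laguerre α (n + 2)
      = C (2 * n + 3 + α) * laguerre α (n + 1) - X * laguerre α (n + 1)
        - C (n + 1 + α) * laguerre α n := by
  ext k
  simp only [coeff_sub, coeff_C_mul, coeff_laguerre_s7]
  rcases k with _ | j
  · simp only [coeff_X_mul_zero, zero_le, if_true, sub_zero]
    exact laguerreCoeff_recurrence_zero α n
  rw [coeff_X_mul, coeff_laguerre_s7]
  obtain hj | hj | hj | hj : j < n ∨ j = n ∨ j = n + 1 ∨ n + 1 < j := by omega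
  · simp only [show j + 1 ≤ n + 2 by omega, show j + 1 ≤ n + 1 by omega, show j ≤ n + 1 by omega,
      show j + 1 ≤ n by omega, if_true]
    exact laguerreCoeff_recurrence_succ α n hj
  · subst j
    simp only [show n + 1 ≤ n + 2 by omega, le_refl, show n ≤ n + 1 by omega,
      show ¬n + 1 ≤ n by omega, if_true, if_false, mul_zero, sub_zero]
    exact laguerreCoeff_recurrence_penultimate α n
  · subst j
    simp only [le_refl, show ¬n + 1 + 1 ≤ n + 1 by omega, show ¬n + 1 + 1 ≤ n by omega,
      if_true, if_false, mul_zero, zero_sub, sub_zero]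
    exact laguerreCoeff_recurrence_top α n
  · simp only [show ¬j + 1 ≤ n + 2 by omega, show ¬j + 1 ≤ n + 1 by omega,
      show ¬j ≤ n + 1 by omega, show ¬j + 1 ≤ n by omega, if_false]
    ring

theorem laguerre_eval_recurrence (α : ℝ) (n : ℕ) (x : ℝ) :
    ((n : ℝ) + 2) * (laguerre α (n + 2)).eval x
      = (2 * n + 3 + α - x) * (laguerre α (n + 1)).eval x - (n + 1 + α) * (laguerre α n).eval x := by
  simpa [sub_mul] using congrArg (eval x) (laguerre_recurrence α n)

theorem laguerre_casoratian_succ (α : ℝ) (n : ℕ) (x y : ℝ) :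
    ((n : ℝ) + 2) * ((laguerre α (n + 1)).eval x * (laguerre α (n + 2)).eval y
        - (laguerre α (n + 2)).eval x * (laguerre α (n + 1)).eval y)
      = (x - y) * (laguerre α (n + 1)).eval x * (laguerre α (n + 1)).eval y
        + (n + 1 + α) * ((laguerre α n).eval x * (laguerre α (n + 1)).eval y
          - (laguerre α (n + 1)).eval x * (laguerre α n).eval y) := by
  linear_combination (laguerre α (n + 1)).eval x * laguerre_eval_recurrence α n y
    - (laguerre α (n + 1)).eval y * laguerre_eval_recurrence α n x

/-- Christoffel–Darboux formula for the Laguerre kernel. -/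
theorem laguerre_christoffel_darboux (α : ℝ) (hα : -1 < α) (n : ℕ) (x y : ℝ) :
    (x - y) * laguerreKernel α n x y
      = ((n + 1).factorial : ℝ) / Real.Gamma (α + n + 1) *
          ((laguerre α n).eval x * (laguerre α (n + 1)).eval y
            - (laguerre α (n + 1)).eval x * (laguerre α n).eval y) := by
  induction n with
  | zero =>
    simp only [laguerreKernel, sum_range_one, laguerre_zero, laguerre_one, eval_one, eval_sub, eval_C,
      eval_X, zero_add, Nat.factorial, Nat.cast_zero, Nat.cast_one, add_zero]
    ring
  | succ n ih =>
    have hpos : 0 < α + n + 1 := by linarith [(n.cast_nonneg : (0 : ℝ) ≤ n)]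
    have hGamma : Real.Gamma (α + (n + 1 : ℕ) + 1) = (α + n + 1) * Real.Gamma (α + n + 1) := by
      rw [Nat.cast_succ, show α + (n + 1) + 1 = α + n + 1 + 1 by ring, Real.Gamma_add_one hpos.ne']
    have hGamma_ne := (Real.Gamma_pos_of_pos hpos).ne'
    rw [laguerreKernel, Finset.sum_range_succ, ← laguerreKernel, mul_add, ih, hGamma,
      Nat.factorial_succ (n + 1), show n + 1 + 1 = n + 2 from rfl]
    field_simp
    push_cast
    linear_combination -((n + 1).factorial : ℝ) * laguerre_casoratian_succ α n x y
end

section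
/- Let α > −1, M ≥ 1, c_1, ..., c_M ∈ ℝ, μ_1, ..., μ_M ∈ ℝ, ν_1, ..., ν_M ∈ ℕ, and n ≥ 1. Suppose S_n is a real polynomial of degree n with leading coefficient (−1)^n/n! satisfying ⟨S_n, p⟩_S = 0 for every real polynomial p with deg p < n. Then the vector of derivative values of S_n satisfies the linear system: for each i ∈ {1, ..., M}, S_n^{(ν_i)}(c_i) = (L_n^α)^{(ν_i)}(c_i) − Σ_{j=1}^M μ_j · (∂^{ν_i+ν_j}/∂x^{ν_i} ∂y^{ν_j}) K_{n−1}^α(x, y)|_{x=c_i, y=c_j} · S_n^{(ν_j)}(c_j). -/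
/-! For `α > -1`, integrating against `x ^ α * exp (-x)` on `(0, ∞)` is the moment functional
`X ^ m ↦ Γ(α + m + 1)`, for which the Laguerre polynomials are orthogonal with
`⟨L_k, L_k⟩ = Γ(α + k + 1) / k!`: by `Γ(α + k + m + 1) = (α + k + 1)_m Γ(α + k + 1)` the moment
`⟨L_n, X ^ m⟩` is an `n`-th finite difference of a monic polynomial of degree `m ≤ n`.

Since `S_n` and `L_n^α` have the same degree and leading coefficient, `S_n - L_n^α` has degree
`< n`, so it equals its Laguerre–Fourier expansion over `k < n`. Sobolev orthogonality of `S_n`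
to `L_k` gives the coefficients `⟨S_n - L_n^α, L_k⟩ = ⟨S_n, L_k⟩ =
-Σ_j μ_j S_n^{(ν_j)}(c_j) (L_k^α)^{(ν_j)}(c_j)`, and differentiating the expansion `ν_i` times at
`c_i` produces the mixed derivatives of `K_{n-1}^α`. -/

open Polynomial Finset MeasureTheory Real

/-- The discrete Sobolev inner product
`⟨f, g⟩_S = ∫_0^∞ f(x) g(x) x^α e^{−x} dx + Σ_{j=1}^M μ_j f^{(ν_j)}(c_j) g^{(ν_j)}(c_j)`. -/
noncomputable def sobolevInner (α : ℝ) {M : ℕ} (c μ : Fin M → ℝ) (ν : Fin M → ℕ)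
    (f g : Polynomial ℝ) : ℝ :=
  (∫ x in Set.Ioi (0 : ℝ), f.eval x * g.eval x * x ^ α * Real.exp (-x)) +
  ∑ j, μ j * (Polynomial.derivative^[ν j] f).eval (c j) *
    (Polynomial.derivative^[ν j] g).eval (c j)


namespace Polynomial

theorem fwdDiff_iter_eval_eq_coeff_mul_factorial {R : Type*} [CommRing R] {P : R[X]} {n : ℕ}
    (hP : P.natDegree ≤ n) (x : R) : (fwdDiff 1)^[n] P.eval x = P.coeff n * n.factorial := by
  rcases hP.lt_or_eq with hlt | rfl
  · rw [fwdDiff_iter_eq_zero_of_degree_lt hlt, coeff_eq_zero_of_natDegree_lt hlt]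
    simp
  · rw [fwdDiff_iter_degree_eq_factorial, leadingCoeff]
    simp

theorem sum_range_neg_one_pow_mul_choose_mul_eval_s14 {R : Type*} [CommRing R] {P : R[X]} {n : ℕ}
    (hP : P.natDegree ≤ n) :
    ∑ k ∈ range (n + 1), (-1) ^ k * (n.choose k : R) * P.eval (k : R) =
      (-1) ^ n * n.factorial * P.coeff n := by
  have h := fwdDiff_iter_eq_sum_shift (1 : R) P.eval n 0
  rw [fwdDiff_iter_eval_eq_coeff_mul_factorial hP] at h
  rw [mul_assoc, ← mul_comm (P.coeff n), h, mul_sum]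
  refine sum_congr rfl fun k hk => ?_
  have hkn : k ≤ n := Nat.lt_succ_iff.mp (mem_range.mp hk)
  have hsign : ((-1 : R) ^ n * (-1) ^ (n - k)) = (-1) ^ k := by
    rw [← pow_add, show n + (n - k) = k + 2 * (n - k) by omega, pow_add, pow_mul]
    simp
  simp only [zsmul_eq_mul, Int.cast_mul, Int.cast_pow, Int.cast_neg, Int.cast_one,
    Int.cast_natCast, zero_add, nsmul_eq_mul, mul_one]
  rw [← hsign]
  ring

end Polynomial

theorem Real.Gamma_add_nat_eq_ascPochhammer_mul {s : ℝ} (hs : 0 < s) (m : ℕ) :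
    Real.Gamma (s + m) = (ascPochhammer ℝ m).eval s * Real.Gamma s := by
  induction m with
  | zero => simp
  | succ m ih =>
    rw [Nat.cast_succ, ← add_assoc, Real.Gamma_add_one (by positivity), ih,
      ascPochhammer_succ_eval]
    ring

theorem laguerre_coeff (α : ℝ) (n k : ℕ) :
    (laguerre α n).coeff k = if k ≤ n then
      (-1 : ℝ) ^ k * (ascPochhammer ℝ (n - k)).eval (α + k + 1) /
        ((n - k).factorial * k.factorial) else 0 := by
  simp only [laguerre, finsetSum_coeff, coeff_C_mul, coeff_X_pow, mul_ite, mul_one, mul_zero,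
    sum_ite_eq, mem_range, Nat.lt_succ_iff]

theorem laguerre_coeff_self (α : ℝ) (n : ℕ) :
    (laguerre α n).coeff n = (-1 : ℝ) ^ n / n.factorial := by
  simp [laguerre_coeff]

theorem laguerre_natDegree (α : ℝ) (n : ℕ) : (laguerre α n).natDegree = n := by
  refine natDegree_eq_of_le_of_coeff_ne_zero ?_ ?_
  · exact natDegree_le_iff_coeff_eq_zero.mpr fun k hk => by
      rw [laguerre_coeff, if_neg (by exact_mod_cast hk.not_ge)]
  · rw [laguerre_coeff_self]
    positivity

theorem laguerre_leadingCoeff (α : ℝ) (n : ℕ) :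
    (laguerre α n).leadingCoeff = (-1 : ℝ) ^ n / n.factorial := by
  rw [leadingCoeff, laguerre_natDegree, laguerre_coeff_self]

theorem laguerre_degree (α : ℝ) (n : ℕ) : (laguerre α n).degree = n := by
  rw [degree_eq_natDegree, laguerre_natDegree]
  exact leadingCoeff_ne_zero.mp (by rw [laguerre_leadingCoeff]; positivity)

noncomputable def laguerreSequence (α : ℝ) : Polynomial.Sequence ℝ :=
  ⟨laguerre α, laguerre_degree α⟩

noncomputable def gammaMoment (α : ℝ) : ℝ[X] →ₗ[ℝ] ℝ :=
  lsum fun m => Real.Gamma (α + m + 1) • LinearMap.id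

theorem gammaMoment_C_mul_X_pow (α a : ℝ) (m : ℕ) :
    gammaMoment α (C a * X ^ m) = a * Real.Gamma (α + m + 1) := by
  rw [C_mul_X_pow_eq_monomial, gammaMoment, lsum_apply, sum_monomial_index _ _ (by simp)]
  simp [mul_comm]

theorem gammaMoment_eq_sum_range (α : ℝ) (p : ℝ[X]) :
    gammaMoment α p = ∑ m ∈ range (p.natDegree + 1), p.coeff m * Real.Gamma (α + m + 1) := by
  rw [gammaMoment, lsum_apply, sum_over_range _ (by simp)]
  simp [mul_comm]

theorem integrableOn_and_integral_pow_mul_rpow_mul_exp {α : ℝ} (hα : -1 < α) (m : ℕ) :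
    IntegrableOn (fun x : ℝ => x ^ m * x ^ α * Real.exp (-x)) (Set.Ioi 0) ∧
      ∫ x in Set.Ioi (0 : ℝ), x ^ m * x ^ α * Real.exp (-x) = Real.Gamma (α + m + 1) := by
  have hs : 0 < α + m + 1 := by linarith [(Nat.cast_nonneg m : (0 : ℝ) ≤ m)]
  have hcongr : Set.EqOn (fun x : ℝ => Real.exp (-x) * x ^ (α + m + 1 - 1))
      (fun x : ℝ => x ^ m * x ^ α * Real.exp (-x)) (Set.Ioi 0) := fun x (hx : 0 < x) => by
    beta_reduce
    rw [add_sub_cancel_right, Real.rpow_add hx, Real.rpow_natCast]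
    ring
  exact ⟨(Real.GammaIntegral_convergent hs).congr_fun hcongr measurableSet_Ioi,
    (setIntegral_congr_fun measurableSet_Ioi hcongr).symm.trans (Real.Gamma_eq_integral hs).symm⟩

theorem integral_eval_mul_rpow_mul_exp {α : ℝ} (hα : -1 < α) (p : ℝ[X]) :
    ∫ x in Set.Ioi (0 : ℝ), p.eval x * x ^ α * Real.exp (-x) = gammaMoment α p := by
  have hsum : ∀ x : ℝ, p.eval x * x ^ α * Real.exp (-x) =
      ∑ m ∈ range (p.natDegree + 1), p.coeff m * (x ^ m * x ^ α * Real.exp (-x)) := fun x => by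
    rw [eval_eq_sum_range, sum_mul, sum_mul]
    exact sum_congr rfl fun m _ => by ring
  have hmoment := integrableOn_and_integral_pow_mul_rpow_mul_exp hα
  simp_rw [hsum]
  rw [integral_finsetSum _ fun m _ => (hmoment m).1.const_mul _, gammaMoment_eq_sum_range]
  exact sum_congr rfl fun m _ => by rw [integral_const_mul, (hmoment m).2]

theorem gammaMoment_laguerre_mul_X_pow {α : ℝ} (hα : -1 < α) {n m : ℕ} (hm : m ≤ n) :
    gammaMoment α (laguerre α n * X ^ m) =
      if m = n then (-1) ^ n * Real.Gamma (α + n + 1) else 0 := by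
  set P : ℝ[X] := (ascPochhammer ℝ m).comp (X - C (-(α + 1)))
  have hP_monic : P.Monic := (monic_ascPochhammer ℝ m).comp_X_sub_C _
  have hP_natDegree : P.natDegree = m := by
    rw [natDegree_comp, ascPochhammer_natDegree, natDegree_X_sub_C, mul_one]
  -- `Γ(α + k + m + 1) = P(k) Γ(α + k + 1)` turns the moment into an `n`-th finite difference of `P`
  have hterm : ∀ k ∈ range (n + 1),
      (-1 : ℝ) ^ k * (ascPochhammer ℝ (n - k)).eval (α + k + 1) /
          ((n - k).factorial * k.factorial) * Real.Gamma (α + (k + m : ℕ) + 1) =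
        Real.Gamma (α + n + 1) / n.factorial * ((-1) ^ k * n.choose k * P.eval (k : ℝ)) := by
    intro k hk
    have hkn : k ≤ n := Nat.lt_succ_iff.mp (mem_range.mp hk)
    have hs : 0 < α + k + 1 := by linarith [(Nat.cast_nonneg k : (0 : ℝ) ≤ k)]
    have hΓm : Real.Gamma (α + (k + m : ℕ) + 1) = P.eval (k : ℝ) * Real.Gamma (α + k + 1) := by
      rw [eval_comp, eval_sub, eval_X, eval_C, show (k : ℝ) - -(α + 1) = α + k + 1 by ring,
        ← Real.Gamma_add_nat_eq_ascPochhammer_mul hs]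
      congr 1
      push_cast
      ring
    have hΓn : (ascPochhammer ℝ (n - k)).eval (α + k + 1) * Real.Gamma (α + k + 1) =
        Real.Gamma (α + n + 1) := by
      rw [← Real.Gamma_add_nat_eq_ascPochhammer_mul hs, Nat.cast_sub hkn]
      congr 1
      ring
    have hchoose : (n.choose k : ℝ) * ((n - k).factorial * k.factorial) = n.factorial := by
      rw [← Nat.choose_mul_factorial_mul_factorial hkn]
      push_cast
      ring
    have hchoose_ne : (n.choose k : ℝ) ≠ 0 := by exact_mod_cast (Nat.choose_pos hkn).ne'
    rw [hΓm, ← hΓn, ← hchoose]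
    field_simp
  calc gammaMoment α (laguerre α n * X ^ m)
      = ∑ k ∈ range (n + 1), (-1 : ℝ) ^ k * (ascPochhammer ℝ (n - k)).eval (α + k + 1) /
          ((n - k).factorial * k.factorial) * Real.Gamma (α + (k + m : ℕ) + 1) := by
        simp_rw [laguerre, sum_mul, map_sum, mul_assoc, ← pow_add, gammaMoment_C_mul_X_pow]
    _ = Real.Gamma (α + n + 1) / n.factorial *
          ∑ k ∈ range (n + 1), (-1) ^ k * n.choose k * P.eval (k : ℝ) := by
        rw [mul_sum]
        exact sum_congr rfl hterm
    _ = Real.Gamma (α + n + 1) / n.factorial * ((-1) ^ n * n.factorial * P.coeff n) := by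
        rw [sum_range_neg_one_pow_mul_choose_mul_eval_s14 (hP_natDegree.trans_le hm)]
    _ = if m = n then (-1) ^ n * Real.Gamma (α + n + 1) else 0 := by
        split_ifs with hmn
        · rw [← hmn, ← hP_natDegree, hP_monic.coeff_natDegree, hP_natDegree]
          field_simp
        · rw [coeff_eq_zero_of_natDegree_lt (by omega)]
          ring

theorem gammaMoment_laguerre_mul_eq_zero {α : ℝ} (hα : -1 < α) {n : ℕ} {p : ℝ[X]}
    (hp : p.degree < n) : gammaMoment α (laguerre α n * p) = 0 := by
  rcases eq_or_ne p 0 with rfl | hp0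
  · simp
  rw [p.as_sum_range_C_mul_X_pow' ((natDegree_lt_iff_degree_lt hp0).mpr hp), mul_sum, map_sum]
  refine sum_eq_zero fun m hm => ?_
  have hmn : m < n := mem_range.mp hm
  rw [mul_left_comm, C_mul', map_smul, gammaMoment_laguerre_mul_X_pow hα hmn.le,
    if_neg hmn.ne, smul_zero]

theorem gammaMoment_laguerre_mul_laguerre_of_ne {α : ℝ} (hα : -1 < α) {k m : ℕ} (hkm : k ≠ m) :
    gammaMoment α (laguerre α k * laguerre α m) = 0 := by
  rcases hkm.lt_or_gt with h | h
  · rw [mul_comm]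
    exact gammaMoment_laguerre_mul_eq_zero hα (by rw [laguerre_degree]; exact_mod_cast h)
  · exact gammaMoment_laguerre_mul_eq_zero hα (by rw [laguerre_degree]; exact_mod_cast h)

theorem gammaMoment_laguerre_mul_self {α : ℝ} (hα : -1 < α) (n : ℕ) :
    gammaMoment α (laguerre α n * laguerre α n) = Real.Gamma (α + n + 1) / n.factorial := by
  have hlower : (laguerre α n).eraseLead.degree < n := by
    simpa only [laguerre_degree] using
      degree_eraseLead_lt (f := laguerre α n) ((laguerreSequence α).ne_zero n)
  have hsign : ((-1 : ℝ) ^ n) * (-1) ^ n = 1 := by rw [← mul_pow]; norm_num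
  nth_rw 2 [← (laguerre α n).eraseLead_add_C_mul_X_pow]
  rw [mul_add, map_add, gammaMoment_laguerre_mul_eq_zero hα hlower, mul_left_comm, C_mul',
    map_smul, laguerre_natDegree, gammaMoment_laguerre_mul_X_pow hα le_rfl, if_pos rfl,
    laguerre_leadingCoeff, smul_eq_mul]
  linear_combination Real.Gamma (α + n + 1) / n.factorial * hsign

theorem eq_sum_laguerre {α : ℝ} (hα : -1 < α) {N : ℕ} {p : ℝ[X]} (hp : p.degree < N) :
    p = ∑ k ∈ range N,
      (k.factorial / Real.Gamma (α + k + 1) * gammaMoment α (p * laguerre α k)) • laguerre α k := by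
  have hmem : p ∈ Submodule.span ℝ (laguerreSequence α '' Set.Iio N) := by
    rw [(laguerreSequence α).span_degreeLT fun k _ => ?_]
    · exact mem_degreeLT.mpr hp
    · exact isUnit_iff_ne_zero.mpr ((laguerreSequence α).ne_zero k ∘ leadingCoeff_eq_zero.mp)
  clear hp
  induction hmem using Submodule.span_induction with
  | mem q hq =>
    obtain ⟨m, hm, rfl⟩ := hq
    have hΓ : Real.Gamma (α + m + 1) ≠ 0 :=
      (Real.Gamma_pos_of_pos (by linarith [(Nat.cast_nonneg m : (0 : ℝ) ≤ m)])).ne'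
    rw [sum_eq_single_of_mem m (mem_range.mpr hm) fun k _ hkm => by
      rw [laguerreSequence, gammaMoment_laguerre_mul_laguerre_of_ne hα hkm.symm, mul_zero,
        zero_smul]]
    rw [laguerreSequence, gammaMoment_laguerre_mul_self hα]
    field_simp
    simp
  | zero => simp
  | add q r _ _ hq hr =>
    conv_lhs => rw [hq, hr]
    simp only [add_mul, map_add, mul_add, add_smul, sum_add_distrib]
  | smul a q _ hq =>
    conv_lhs => rw [hq]
    simp only [smul_mul_assoc, map_smul, smul_eq_mul, mul_left_comm _ a, mul_smul, smul_sum]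

theorem Polynomial.iteratedDeriv_eval {𝕜 : Type*} [NontriviallyNormedField 𝕜] (p : 𝕜[X])
    (m : ℕ) : iteratedDeriv m (fun x => p.eval x) = fun x => (derivative^[m] p).eval x := by
  induction m generalizing p with
  | zero => simp
  | succ m ih =>
    have hderiv : deriv (fun x => p.eval x) = fun x => (derivative p).eval x := by
      ext
      exact p.deriv
    rw [iteratedDeriv_succ', hderiv, ih, Function.iterate_succ_apply]

theorem iteratedDeriv_sum_mul_eval {𝕜 ι : Type*} [NontriviallyNormedField 𝕜] (s : Finset ι)
    (a : ι → 𝕜) (p : ι → 𝕜[X]) (m : ℕ) (x : 𝕜) :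
    iteratedDeriv m (fun x => ∑ k ∈ s, a k * (p k).eval x) x =
      ∑ k ∈ s, a k * (derivative^[m] (p k)).eval x := by
  have h : (fun x => ∑ k ∈ s, a k * (p k).eval x) = fun x => (∑ k ∈ s, C (a k) * p k).eval x :=
    funext fun x => by simp [eval_finsetSum]
  rw [h, iteratedDeriv_eval, iterate_derivative_sum]
  simp [iterate_derivative_C_mul, eval_finsetSum]

theorem iteratedDeriv_iteratedDeriv_laguerreKernel (α : ℝ) (N s t : ℕ) (x y : ℝ) :
    iteratedDeriv s (fun x => iteratedDeriv t (fun y => laguerreKernel α N x y) y) x =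
      ∑ k ∈ range (N + 1), k.factorial / Real.Gamma (α + k + 1) *
        (derivative^[s] (laguerre α k)).eval x * (derivative^[t] (laguerre α k)).eval y := by
  have hinner : ∀ x', iteratedDeriv t (fun y => laguerreKernel α N x' y) y =
      ∑ k ∈ range (N + 1), k.factorial / Real.Gamma (α + k + 1) *
        (derivative^[t] (laguerre α k)).eval y * (laguerre α k).eval x' := fun x' => by
    simp_rw [laguerreKernel, iteratedDeriv_sum_mul_eval]
    exact sum_congr rfl fun k _ => by ring
  simp_rw [hinner]
  rw [iteratedDeriv_sum_mul_eval]
  exact sum_congr rfl fun k _ => by ring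

theorem sobolevInner_eq_gammaMoment_add {α : ℝ} (hα : -1 < α) {M : ℕ} (c μ : Fin M → ℝ)
    (ν : Fin M → ℕ) (f g : ℝ[X]) :
    sobolevInner α c μ ν f g = gammaMoment α (f * g) +
      ∑ j, μ j * (derivative^[ν j] f).eval (c j) * (derivative^[ν j] g).eval (c j) := by
  simp only [sobolevInner, ← integral_eval_mul_rpow_mul_exp hα, eval_mul]

theorem degree_sub_laguerre_lt (α : ℝ) {n : ℕ} {S : ℝ[X]} (hdeg : S.natDegree = n)
    (hlead : S.leadingCoeff = (-1) ^ n / n.factorial) : (S - laguerre α n).degree < n := by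
  have hS : S ≠ 0 := leadingCoeff_ne_zero.mp (by rw [hlead]; positivity)
  refine laguerre_degree α n ▸ degree_sub_lt_right ?_ ((laguerreSequence α).ne_zero n) ?_
  · rw [degree_eq_natDegree hS, laguerre_degree, hdeg]
  · rw [hlead, laguerre_leadingCoeff]

theorem sobolev_derivative_values_linear_system_general (α : ℝ) (hα : -1 < α) (M : ℕ)
    (c : Fin M → ℝ) (μ : Fin M → ℝ) (ν : Fin M → ℕ) (n : ℕ) (hn : 1 ≤ n)
    (S : Polynomial ℝ) (hdeg : S.natDegree = n)
    (hlead : S.leadingCoeff = (-1) ^ n / n.factorial)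
    (horth : ∀ p : Polynomial ℝ, p.degree < n → sobolevInner α c μ ν S p = 0) (i : Fin M) :
    (Polynomial.derivative^[ν i] S).eval (c i)
      = (Polynomial.derivative^[ν i] (laguerre α n)).eval (c i) -
        ∑ j, μ j *
          iteratedDeriv (ν i)
            (fun x => iteratedDeriv (ν j) (fun y => laguerreKernel α (n - 1) x y) (c j))
            (c i) *
          (Polynomial.derivative^[ν j] S).eval (c j) := by
  have hR := degree_sub_laguerre_lt α hdeg hlead
  have hmoment : ∀ k ∈ range n, gammaMoment α ((S - laguerre α n) * laguerre α k) =
      -∑ j, μ j * (derivative^[ν j] S).eval (c j) *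
        (derivative^[ν j] (laguerre α k)).eval (c j) := by
    intro k hk
    have hk : k < n := mem_range.mp hk
    have h := horth (laguerre α k) (by rw [laguerre_degree]; exact_mod_cast hk)
    rw [sobolevInner_eq_gammaMoment_add hα] at h
    rw [sub_mul, map_sub, gammaMoment_laguerre_mul_laguerre_of_ne hα hk.ne']
    linarith
  have hexpand := congrArg (fun p => (derivative^[ν i] p).eval (c i)) (eq_sum_laguerre hα hR)
  simp only [iterate_derivative_sum, iterate_derivative_smul, eval_finsetSum, eval_smul,
    smul_eq_mul, iterate_derivative_sub, eval_sub, sub_eq_iff_eq_add'] at hexpand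
  simp_rw [iteratedDeriv_iteratedDeriv_laguerreKernel, Nat.sub_add_cancel hn]
  rw [hexpand, sum_congr rfl fun k hk => by rw [hmoment k hk], sub_eq_add_neg]
  congr 1
  simp only [mul_neg, neg_mul, sum_neg_distrib, mul_sum, sum_mul]
  rw [sum_comm, neg_inj]
  exact sum_congr rfl fun j _ => sum_congr rfl fun k _ => by ring

/-- The vector of derivative values of the Sobolev-orthogonal polynomial `S_n` satisfies a
linear system involving mixed partial derivatives of the kernel `K_{n−1}^α`. -/
theorem sobolev_derivative_values_linear_system (α : ℝ) (hα : -1 < α) (M : ℕ) (hM : 1 ≤ M)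
    (c : Fin M → ℝ) (μ : Fin M → ℝ) (ν : Fin M → ℕ) (n : ℕ) (hn : 1 ≤ n)
    (S : Polynomial ℝ) (hdeg : S.natDegree = n)
    (hlead : S.leadingCoeff = (-1) ^ n / n.factorial)
    (horth : ∀ p : Polynomial ℝ, p.degree < n → sobolevInner α c μ ν S p = 0) (i : Fin M) :
    (Polynomial.derivative^[ν i] S).eval (c i)
      = (Polynomial.derivative^[ν i] (laguerre α n)).eval (c i) -
        ∑ j, μ j *
          iteratedDeriv (ν i)
            (fun x => iteratedDeriv (ν j) (fun y => laguerreKernel α (n - 1) x y) (c j))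
            (c i) *
          (Polynomial.derivative^[ν j] S).eval (c j) :=
  sobolev_derivative_values_linear_system_general α hα M c μ ν n hn S hdeg hlead horth i
end
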